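/- arXiv:2406.08462 — 6 statements merged into one kernel-verified Lean document; each statement's English description precedes it below -/
import Mathlib

section
/- Let $b_m$ for $m \in \mathbb{Z}$ be defined by $b_* = \sum_{m \in \mathbb{N}} h_{*-2mc+n}$ where $h_k = \dim H_k(B;\mathbb{Q})$ for a space $B$ with $h_k = 0$ for $k < 0$ and $k > 2n$, $h_k = h_{2n-k}$ for all $k$ (Poincaré duality), and $c \geq 1$ an integer. Then for $s$ large enough that $2sc > 2n$, one has $2\sum_{m=2c-n}^{2sc} b_m = (2s-1)\sum_k h_k + h_n + 2\sum_{m=s+1}^{2s-1} h_{n+2(s-m)c}$. -/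
/-! Swapping the two summations writes `∑ b` as a sum of cumulative sums
`P U = h 0 + ⋯ + h U` taken at `U = n + 2(s - m)c`, `1 ≤ m ≤ 2s - 1` (the terms with `m ≥ 2s`
vanish because `2sc > 2n`). Poincaré duality gives
`P U + P (2n - U) = r_B + h U`, and `m ↦ 2s - m` exchanges `U` and `2n - U`; so twice the sum is
`(2s - 1) r_B` plus `∑ h (n + 2(s - m)c)`, whose terms are again symmetric about `m = s`. -/

open Finset

section Reindexing

variable {M : Type*} [AddCommMonoid M]

lemma sum_Icc_comp_add_right (f : ℤ → M) (t a b : ℤ) :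
    ∑ m ∈ Icc a b, f (m + t) = ∑ m ∈ Icc (a + t) (b + t), f m := by
  rw [← map_add_right_Icc, sum_map]
  rfl

lemma sum_Icc_comp_sub_left (f : ℤ → M) (t a b : ℤ) :
    ∑ m ∈ Icc a b, f (t - m) = ∑ m ∈ Icc (t - b) (t - a), f m :=
  sum_nbij' (fun m => t - m) (fun m => t - m) (fun m hm => by simp only [mem_Icc] at *; omega)
    (fun m hm => by simp only [mem_Icc] at *; omega) (fun m _ => by omega) (fun m _ => by omega)
    (fun _ _ => rfl)

lemma two_nsmul_sum_Icc_of_add_reflect {f g : ℤ → M} {a b : ℤ} {R : M}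
    (hf : ∀ m ∈ Icc a b, f m + f (a + b - m) = R + g m) :
    2 • ∑ m ∈ Icc a b, f m = #(Icc a b) • R + ∑ m ∈ Icc a b, g m := by
  have hreflect : ∑ m ∈ Icc a b, f (a + b - m) = ∑ m ∈ Icc a b, f m := by
    rw [sum_Icc_comp_sub_left]
    congr 2 <;> ring
  rw [two_nsmul]
  nth_rewrite 2 [← hreflect]
  rw [← sum_add_distrib, sum_congr rfl hf, sum_add_distrib, sum_const]

lemma sum_Icc_eq_add_two_nsmul_of_symm {g : ℤ → M} {a b c : ℤ} (hab : a + b = 2 * c)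
    (hac : a ≤ c) (hg : ∀ m, g (2 * c - m) = g m) :
    ∑ m ∈ Icc a b, g m = g c + 2 • ∑ m ∈ Icc (c + 1) b, g m := by
  have hsplit : Icc a b = Icc a (c - 1) ∪ insert c (Icc (c + 1) b) := by
    ext m; simp only [mem_Icc, mem_union, mem_insert]; omega
  have hdisj : Disjoint (Icc a (c - 1)) (insert c (Icc (c + 1) b)) := by
    simp only [disjoint_left, mem_Icc, mem_insert]; omega
  have hlower : ∑ m ∈ Icc a (c - 1), g m = ∑ m ∈ Icc (c + 1) b, g m := by
    rw [← sum_congr rfl fun m _ => hg m, sum_Icc_comp_sub_left]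
    congr 2 <;> omega
  rw [hsplit, sum_union hdisj, sum_insert (by simp), hlower, two_nsmul]
  abel

lemma tsum_succ_eq_sum_Icc {N : ℤ} [TopologicalSpace M] (f : ℤ → M)
    (hf : ∀ m, N < m → f m = 0) :
    ∑' m : ℕ, f ((m : ℤ) + 1) = ∑ m ∈ Icc 1 N, f m := by
  rw [tsum_eq_sum (s := range N.toNat) fun m hm => hf _ (by simp only [mem_range] at hm; omega)]
  exact sum_nbij' (fun m => (m : ℤ) + 1) (fun m => (m - 1).toNat)
    (fun m hm => by simp only [mem_range, mem_Icc] at *; omega)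
    (fun m hm => by simp only [mem_range, mem_Icc] at *; omega)
    (fun m _ => by omega) (fun m hm => by simp only [mem_Icc] at hm; omega) (fun _ _ => rfl)

end Reindexing

section CumulativeSum

variable {M : Type*} [AddCommMonoid M]

noncomputable def cumSum (h : ℤ → M) (U : ℤ) : M := ∑ k ∈ Icc 0 U, h k

variable {h : ℤ → M} {d U : ℤ}

lemma cumSum_of_neg (hU : U < 0) : cumSum h U = 0 := by
  rw [cumSum, Icc_eq_empty (by omega), sum_empty]

lemma sum_Icc_eq_cumSum {a : ℤ} (h0 : ∀ k < 0, h k = 0) (ha : a ≤ 0) :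
    ∑ k ∈ Icc a U, h k = cumSum h U :=
  (sum_subset (Icc_subset_Icc_left ha) fun k hk hk' => h0 k (by
    simp only [mem_Icc] at hk hk'; omega)).symm

lemma cumSum_of_le (hd : ∀ k, d < k → h k = 0) (hU : d ≤ U) : cumSum h U = cumSum h d :=
  (sum_subset (Icc_subset_Icc_right hU) fun k hk hk' => hd k (by
    simp only [mem_Icc] at hk hk'; omega)).symm

lemma cumSum_add_cumSum_sub (hsupp : ∀ k, k < 0 ∨ d < k → h k = 0)
    (hdual : ∀ k, h k = h (d - k)) (U : ℤ) :
    cumSum h U + cumSum h (d - U) = cumSum h d + h U := by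
  rcases lt_or_ge U 0 with hU | hU
  · rw [cumSum_of_neg hU, cumSum_of_le (fun k hk => hsupp k (.inr hk)) (by omega),
      hsupp U (.inl hU), zero_add, add_zero]
  rcases lt_or_ge d U with hdU | hdU
  · rw [cumSum_of_le (fun k hk => hsupp k (.inr hk)) hdU.le, cumSum_of_neg (U := d - U) (by omega),
      hsupp U (.inr hdU)]
  have hreflect : cumSum h (d - U) = ∑ k ∈ Icc U d, h k := by
    rw [cumSum, ← sum_congr rfl fun k _ => (hdual k).symm, sum_Icc_comp_sub_left]
    congr 2 <;> ring
  have hsplit : Icc 0 d = Icc 0 U ∪ Ioc U d := by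
    ext k; simp only [mem_Icc, mem_Ioc, mem_union]; omega
  have hdisj : Disjoint (Icc 0 U) (Ioc U d) := by
    simp only [disjoint_left, mem_Icc, mem_Ioc]; omega
  rw [hreflect, ← Ioc_insert_left hdU, sum_insert (by simp), cumSum, cumSum, hsplit,
    sum_union hdisj]
  abel

end CumulativeSum

theorem stmt_0_general (n c s : ℕ)
    (h : ℤ → ℕ) (b : ℤ → ℕ)
    (hsupp : ∀ k : ℤ, (k < 0 ∨ (2 * (n : ℤ)) < k) → h k = 0)
    (hdual : ∀ k : ℤ, h k = h (2 * (n : ℤ) - k))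
    (hb : ∀ x : ℤ, b x = ∑' m : ℕ, h (x - 2 * ((m : ℤ) + 1) * (c : ℤ) + (n : ℤ)))
    (hs : 2 * n < 2 * s * c) :
    2 * ∑ m ∈ Finset.Icc (2 * (c : ℤ) - (n : ℤ)) (2 * (s : ℤ) * (c : ℤ)), b m =
      (2 * s - 1) * ∑ k ∈ Finset.Icc (0 : ℤ) (2 * (n : ℤ)), h k + h n +
        2 * ∑ m ∈ Finset.Icc ((s : ℤ) + 1) (2 * (s : ℤ) - 1),
              h ((n : ℤ) + 2 * ((s : ℤ) - m) * (c : ℤ)) := by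
  have hsZ : 2 * (n : ℤ) < 2 * s * c := by exact_mod_cast hs
  have hs1 : 1 ≤ s := Nat.pos_of_ne_zero fun h0 => by simp [h0] at hs
  have hc0 : (0 : ℤ) ≤ c := c.cast_nonneg
  have hbfin : ∀ x ∈ Icc (2 * (c : ℤ) - n) (2 * s * c),
      b x = ∑ m ∈ Icc 1 (2 * (s : ℤ) - 1), h (x - 2 * m * c + n) := fun x hx => by
    rw [mem_Icc] at hx
    rw [hb x, tsum_succ_eq_sum_Icc (fun m : ℤ => h (x - 2 * m * c + n))]
    intro m hm
    exact hsupp _ (.inl (by nlinarith [mul_nonneg (by omega : (0 : ℤ) ≤ m - 2 * s) hc0]))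
  have hswap : ∑ x ∈ Icc (2 * (c : ℤ) - n) (2 * s * c), b x
      = ∑ m ∈ Icc 1 (2 * (s : ℤ) - 1), cumSum h (n + 2 * (s - m) * c) := by
    rw [sum_congr rfl hbfin, sum_comm]
    refine sum_congr rfl fun m hm => ?_
    rw [mem_Icc] at hm
    simp_rw [sub_add_eq_add_sub, add_sub_assoc]
    rw [sum_Icc_comp_add_right (fun k => h k),
      sum_Icc_eq_cumSum (fun k hk => hsupp k (.inl hk)) (by nlinarith)]
    ring_nf
  have hpair := two_nsmul_sum_Icc_of_add_reflect (R := cumSum h (2 * n))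
    (g := fun m : ℤ => h (n + 2 * (s - m) * c)) (a := 1) (b := 2 * (s : ℤ) - 1)
    (f := fun m : ℤ => cumSum h (n + 2 * (s - m) * c)) fun m _ => by
      rw [← cumSum_add_cumSum_sub hsupp hdual]
      ring_nf
  have hsymm := sum_Icc_eq_add_two_nsmul_of_symm (g := fun m : ℤ => h (n + 2 * (s - m) * c))
    (a := 1) (b := 2 * (s : ℤ) - 1) (c := s) (by ring) (by omega) fun m => by
      rw [hdual]
      ring_nf
  rw [hswap, ← smul_eq_mul, hpair, hsymm, Int.card_Icc, smul_eq_mul, smul_eq_mul,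
    show (2 * (s : ℤ) - 1 + 1 - 1).toNat = 2 * s - 1 by omega]
  simp only [sub_self, mul_zero, zero_mul, add_zero]
  rw [cumSum, add_assoc]

/-- Lemma A.1 (sumb_m): combinatorial identity for shifted sums of Betti numbers.
`h k` abstracts `dim H_k(B;ℚ)`; `b` is the Betti number of the prequantization homology,
`b x = ∑_{m ≥ 1} h (x - 2 m c + n)`. -/
theorem stmt_0 (n c s : ℕ) (hc : 1 ≤ c)
    (h : ℤ → ℕ) (b : ℤ → ℕ)
    (hsupp : ∀ k : ℤ, (k < 0 ∨ (2 * (n : ℤ)) < k) → h k = 0)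
    (hdual : ∀ k : ℤ, h k = h (2 * (n : ℤ) - k))
    (hb : ∀ x : ℤ, b x = ∑' m : ℕ, h (x - 2 * ((m : ℤ) + 1) * (c : ℤ) + (n : ℤ)))
    (hs : 2 * n < 2 * s * c) :
    2 * ∑ m ∈ Finset.Icc (2 * (c : ℤ) - (n : ℤ)) (2 * (s : ℤ) * (c : ℤ)), b m =
      (2 * s - 1) * ∑ k ∈ Finset.Icc (0 : ℤ) (2 * (n : ℤ)), h k + h n +
        2 * ∑ m ∈ Finset.Icc ((s : ℤ) + 1) (2 * (s : ℤ) - 1),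
              h ((n : ℤ) + 2 * ((s : ℤ) - m) * (c : ℤ)) :=
  stmt_0_general n c s h b hsupp hdual hb hs
end

section
/- Let $n \geq 1$ be odd, $c > n/2$ an integer, and $(h_k)$ a finitely supported sequence of naturals with $h_k = 0$ unless $0 \leq k \leq 2n$, $h_k = h_{2n-k}$, and $h_k = 0$ for all odd $k$. Define $b_* = \sum_{m\in\mathbb{N}} h_{*-2mc+n}$ and let $r = \sum_k h_k$. Then for every $s \in \mathbb{N}$ with $2sc > 2n$, $\sum_{m=2c-n}^{2sc} b_m = s r - r/2$. -/
/-!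
Only the first `s` shifts of `h` reach the window `[2c - n, 2sc]`. Each of the first `s - 1`
shifts carries all of the support `[0, 2n]` of `h` into the window, contributing `r`; the last one
meets only the lower half `[0, n]`. Since `h` is symmetric about `n` and vanishes at the odd
degree `n`, that half carries exactly `r / 2`.
-/

open Finset

section IntervalSums

variable {α M : Type*} [AddCommMonoid M]

theorem sum_Icc_eq_sum_Icc_max_min [LinearOrder α] [LocallyFiniteOrder α] {f : α → M}
    {lo hi : α} (hf : ∀ k, k < lo ∨ hi < k → f k = 0) (a b : α) :
    ∑ k ∈ Icc a b, f k = ∑ k ∈ Icc (max a lo) (min b hi), f k := by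
  refine (sum_subset (Icc_subset_Icc (le_max_left a lo) (min_le_left b hi))
    fun k hk hk' => hf k ?_).symm
  rw [mem_Icc] at hk
  by_contra! hk_mem
  exact hk' (mem_Icc.2 ⟨max_le hk.1 hk_mem.1, le_min hk.2 hk_mem.2⟩)

theorem sum_Icc_comp_add_right_s1 [AddCommMonoid α] [PartialOrder α] [IsOrderedCancelAddMonoid α]
    [ExistsAddOfLE α] [LocallyFiniteOrder α] (f : α → M) (a b c : α) :
    ∑ x ∈ Icc a b, f (x + c) = ∑ k ∈ Icc (a + c) (b + c), f k := by
  rw [← map_add_right_Icc, sum_map]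
  rfl

theorem sum_Icc_comp_const_sub [AddCommGroup α] [PartialOrder α] [IsOrderedAddMonoid α]
    [LocallyFiniteOrder α] (f : α → M) (a b c : α) :
    ∑ k ∈ Icc a b, f (c - k) = ∑ k ∈ Icc (c - b) (c - a), f k :=
  sum_nbij' (c - ·) (c - ·)
    (fun k hk => by
      simp only [mem_Icc] at hk ⊢
      exact ⟨sub_le_sub_left hk.2 c, sub_le_sub_left hk.1 c⟩)
    (fun k hk => by
      simp only [mem_Icc] at hk ⊢
      exact ⟨le_sub_comm.mp hk.2, sub_le_comm.mp hk.1⟩)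
    (fun k _ => sub_sub_cancel c k) (fun k _ => sub_sub_cancel c k) (fun _ _ => rfl)

theorem sum_Icc_zero_two_mul_eq_two_nsmul {f : ℤ → M} {n : ℤ} (hn : 0 ≤ n)
    (hsymm : ∀ k, f (2 * n - k) = f k) (hmid : f n = 0) :
    ∑ k ∈ Icc 0 (2 * n), f k = 2 • ∑ k ∈ Icc 0 n, f k := by
  have hunion : Icc 0 n ∪ Icc n (2 * n) = Icc 0 (2 * n) := by
    ext k
    simp only [mem_union, mem_Icc]
    omega
  have hinter : Icc 0 n ∩ Icc n (2 * n) = {n} := by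
    ext k
    simp only [mem_inter, mem_Icc, mem_singleton]
    omega
  have hsplit := sum_union_inter (s₁ := Icc 0 n) (s₂ := Icc n (2 * n)) (f := f)
  rw [hunion, hinter, sum_singleton, hmid, add_zero] at hsplit
  have hreflect : ∑ k ∈ Icc n (2 * n), f k = ∑ k ∈ Icc 0 n, f k := by
    rw [← sum_congr rfl fun k _ => hsymm k, sum_Icc_comp_const_sub]
    congr 1
    rw [sub_self, two_mul, add_sub_cancel_right]
  rw [hsplit, hreflect, two_nsmul]

end IntervalSums

section BettiSum

variable {n c : ℕ} {h b : ℤ → ℕ}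

theorem betti_eq_sum_range (hc : n < 2 * c)
    (hsupp : ∀ k : ℤ, (k < 0 ∨ 2 * (n : ℤ) < k) → h k = 0)
    (hb : ∀ x : ℤ, b x = ∑' m : ℕ, h (x - 2 * ((m : ℤ) + 1) * (c : ℤ) + (n : ℤ)))
    {s : ℕ} {x : ℤ} (hx : x ≤ 2 * s * c) :
    b x = ∑ m ∈ range s, h (x - 2 * ((m : ℤ) + 1) * c + n) := by
  rw [hb x]
  refine tsum_eq_sum fun m hm => hsupp _ (Or.inl ?_)
  have hsm : (s : ℤ) ≤ m := by exact_mod_cast not_lt.1 (mem_range.not.1 hm)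
  have hc' : (n : ℤ) < 2 * c := by exact_mod_cast hc
  nlinarith [mul_le_mul_of_nonneg_right hsm (Int.natCast_nonneg c)]

theorem sum_Icc_shift_eq_sum_Icc_zero_min
    (hsupp : ∀ k : ℤ, (k < 0 ∨ 2 * (n : ℤ) < k) → h k = 0) (s m : ℕ) :
    ∑ x ∈ Icc (2 * (c : ℤ) - n) (2 * s * c), h (x - 2 * ((m : ℤ) + 1) * c + n) =
      ∑ k ∈ Icc 0 (min (2 * ((s : ℤ) - m - 1) * c + n) (2 * n)), h k := by
  have hlower : 2 * (c : ℤ) - n + (n - 2 * ((m : ℤ) + 1) * c) = -(2 * m * c) := by ring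
  have hupper :
      2 * (s : ℤ) * c + (n - 2 * ((m : ℤ) + 1) * c) = 2 * ((s : ℤ) - m - 1) * c + n := by ring
  calc ∑ x ∈ Icc (2 * (c : ℤ) - n) (2 * s * c), h (x - 2 * ((m : ℤ) + 1) * c + n)
      = ∑ x ∈ Icc (2 * (c : ℤ) - n) (2 * s * c), h (x + (n - 2 * ((m : ℤ) + 1) * c)) :=
        sum_congr rfl fun x _ => congrArg h (by ring)
    _ = ∑ k ∈ Icc (-(2 * (m : ℤ) * c)) (2 * ((s : ℤ) - m - 1) * c + n), h k := by
        rw [sum_Icc_comp_add_right_s1, hlower, hupper]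
    _ = ∑ k ∈ Icc 0 (min (2 * ((s : ℤ) - m - 1) * c + n) (2 * n)), h k := by
        rw [sum_Icc_eq_sum_Icc_max_min hsupp, max_eq_right (neg_nonpos.2 (by positivity))]

theorem sum_Icc_betti_eq (hc : n < 2 * c)
    (hsupp : ∀ k : ℤ, (k < 0 ∨ 2 * (n : ℤ) < k) → h k = 0)
    (hb : ∀ x : ℤ, b x = ∑' m : ℕ, h (x - 2 * ((m : ℤ) + 1) * (c : ℤ) + (n : ℤ)))
    (t : ℕ) :
    ∑ x ∈ Icc (2 * (c : ℤ) - n) (2 * ((t + 1 : ℕ) : ℤ) * c), b x =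
      t * ∑ k ∈ Icc 0 (2 * (n : ℤ)), h k + ∑ k ∈ Icc 0 (n : ℤ), h k := by
  have hc' : (n : ℤ) < 2 * c := by exact_mod_cast hc
  have hfull :
      ∀ m ∈ range t, min (2 * (((t + 1 : ℕ) : ℤ) - m - 1) * c + n) (2 * n) = 2 * n := by
    intro m hm
    have hmt : (m : ℤ) + 1 ≤ t := by exact_mod_cast mem_range.1 hm
    refine min_eq_right ?_
    push_cast
    nlinarith [mul_le_mul_of_nonneg_right hmt (Int.natCast_nonneg c)]
  have hlast : min (2 * (((t + 1 : ℕ) : ℤ) - t - 1) * c + n) (2 * n) = n := by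
    push_cast
    omega
  rw [sum_congr rfl fun x hx => betti_eq_sum_range hc hsupp hb (mem_Icc.1 hx).2, sum_comm,
    sum_range_succ, sum_congr rfl fun m _ => sum_Icc_shift_eq_sum_Icc_zero_min hsupp (t + 1) m,
    sum_Icc_shift_eq_sum_Icc_zero_min hsupp, hlast, sum_congr rfl fun m hm => by rw [hfull m hm],
    sum_const, card_range, smul_eq_mul]

end BettiSum

theorem stmt_1_general (n c s : ℕ) (hnodd : Odd n) (hc : n < 2 * c)
    (h : ℤ → ℕ) (b : ℤ → ℕ)
    (hsupp : ∀ k : ℤ, (k < 0 ∨ (2 * (n : ℤ)) < k) → h k = 0)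
    (hdual : ∀ k : ℤ, h k = h (2 * (n : ℤ) - k))
    (hlac : ∀ k : ℤ, Odd k → h k = 0)
    (hb : ∀ x : ℤ, b x = ∑' m : ℕ, h (x - 2 * ((m : ℤ) + 1) * (c : ℤ) + (n : ℤ)))
    (hs : 2 * n < 2 * s * c) :
    ((∑ m ∈ Finset.Icc (2 * (c : ℤ) - (n : ℤ)) (2 * (s : ℤ) * (c : ℤ)), b m : ℕ) : ℚ) =
      (s : ℚ) * (∑ k ∈ Finset.Icc (0 : ℤ) (2 * (n : ℤ)), h k : ℕ) -
        ((∑ k ∈ Finset.Icc (0 : ℤ) (2 * (n : ℤ)), h k : ℕ) : ℚ) / 2 := by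
  obtain ⟨t, rfl⟩ : ∃ t, s = t + 1 :=
    Nat.exists_eq_succ_of_ne_zero (by rintro rfl; simp at hs)
  have hhalf := sum_Icc_zero_two_mul_eq_two_nsmul (Int.natCast_nonneg n)
    (fun k => (hdual k).symm) (hlac n hnodd.natCast)
  rw [sum_Icc_betti_eq hc hsupp hb t, hhalf, smul_eq_mul]
  push_cast
  ring

/-- Equation (sumb_m-odd): for odd `n`, `c > n/2`, lacunary Betti numbers `h` of the base,
the truncated Betti sum of the prequantization homology equals `s·r − r/2`. -/
theorem stmt_1 (n c s : ℕ) (hn : 1 ≤ n) (hnodd : Odd n) (hc : n < 2 * c)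
    (h : ℤ → ℕ) (b : ℤ → ℕ)
    (hsupp : ∀ k : ℤ, (k < 0 ∨ (2 * (n : ℤ)) < k) → h k = 0)
    (hdual : ∀ k : ℤ, h k = h (2 * (n : ℤ) - k))
    (hlac : ∀ k : ℤ, Odd k → h k = 0)
    (hb : ∀ x : ℤ, b x = ∑' m : ℕ, h (x - 2 * ((m : ℤ) + 1) * (c : ℤ) + (n : ℤ)))
    (hs : 2 * n < 2 * s * c) :
    ((∑ m ∈ Finset.Icc (2 * (c : ℤ) - (n : ℤ)) (2 * (s : ℤ) * (c : ℤ)), b m : ℕ) : ℚ) =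
      (s : ℚ) * (∑ k ∈ Finset.Icc (0 : ℤ) (2 * (n : ℤ)), h k : ℕ) -
        ((∑ k ∈ Finset.Icc (0 : ℤ) (2 * (n : ℤ)), h k : ℕ) : ℚ) / 2 :=
  stmt_1_general n c s hnodd hc h b hsupp hdual hlac hb hs
end

section
/- Suppose $\hat\mu_1, \dots, \hat\mu_r$ are positive reals and for each $i$ there is an integer sequence $(\mu_{i,j})_{j\geq 1}$ with $|j\hat\mu_i - \mu_{i,j}| < n$ for all $j$. Then for every $\epsilon > 0$ there exist infinitely many pairwise disjoint closed intervals $I \subset \mathbb{R}$ of length $2n + \epsilon$ such that for each such $I$ there exist positive integers $k_1, \dots, k_r$ with $\mu_{i,k_i} \in I$ for all $i = 1, \dots, r$. -/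
/-!
Work in the compact torus `∏ i, ℝ / μ̂ᵢ ℤ`. By compactness the multiples `q • N` of the diagonal
point `N` return arbitrarily close to `0`, so the single real `T = q N ≥ N` lies within `ε / 2` of
some multiple `kᵢ μ̂ᵢ` for every `i` at once. Since `μ_{i,kᵢ}` is within `n` of `kᵢ μ̂ᵢ`, the closed
interval of radius `n + ε / 2` about `T` contains all the `μ_{i,kᵢ}`; as `N` is arbitrary, such
centres can be chosen more than `2n + ε` apart.
-/

open Set

theorem exists_pos_nsmul_norm_lt {G : Type*} [SeminormedAddCommGroup G] [CompactSpace G]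
    (x : G) {δ : ℝ} (hδ : 0 < δ) : ∃ q : ℕ, 0 < q ∧ ‖q • x‖ < δ := by
  obtain ⟨a, φ, hφ, hlim⟩ := CompactSpace.tendsto_subseq (fun m : ℕ => m • x)
  obtain ⟨N, hN⟩ := Metric.cauchySeq_iff'.1 hlim.cauchySeq δ hδ
  have hφN : φ N < φ (N + 1) := hφ N.lt_succ_self
  refine ⟨φ (N + 1) - φ N, Nat.sub_pos_of_lt hφN, ?_⟩
  rw [sub_nsmul _ hφN.le, ← sub_eq_add_neg, ← dist_eq_norm]
  exact hN (N + 1) N.le_succ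

theorem AddCircle.exists_nat_mul_sub_lt_of_norm_lt {p T δ : ℝ} (hp : 0 < p) (hT : δ < T)
    (h : ‖(T : AddCircle p)‖ < δ) : ∃ k : ℕ, 0 < k ∧ |k * p - T| < δ := by
  rw [AddCircle.norm_eq, abs_sub_comm] at h
  set m := round (p⁻¹ * T)
  have hm : 0 < m := by
    have : (0 : ℝ) < m * p := by linarith [(abs_lt.1 h).1]
    exact_mod_cast pos_of_mul_pos_left this hp.le
  lift m to ℕ using hm.le with k
  exact ⟨k, by exact_mod_cast hm, by exact_mod_cast h⟩

theorem exists_ge_forall_abs_nat_mul_sub_lt {ι : Type*} [Fintype ι] {μ : ι → ℝ}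
    (hμ : ∀ i, 0 < μ i) {δ : ℝ} (hδ : 0 < δ) (B : ℝ) :
    ∃ T ≥ B, ∃ k : ι → ℕ, (∀ i, 0 < k i) ∧ ∀ i, |(k i : ℝ) * μ i - T| < δ := by
  have : ∀ i, Fact (0 < μ i) := fun i => ⟨hμ i⟩
  set N := max B δ + 1
  obtain ⟨q, hq, hqN⟩ := exists_pos_nsmul_norm_lt (fun i => (N : AddCircle (μ i))) hδ
  have hNq : N ≤ q * N := le_mul_of_one_le_left (by positivity) (by exact_mod_cast hq)
  have hclose : ∀ i, ‖((q * N : ℝ) : AddCircle (μ i))‖ < δ := fun i => by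
    simpa only [← nsmul_eq_mul, AddCircle.coe_nsmul, Pi.smul_apply] using
      (pi_norm_lt_iff hδ).1 hqN i
  choose k hk using fun i =>
    AddCircle.exists_nat_mul_sub_lt_of_norm_lt (hμ i) (by linarith [le_max_right B δ]) (hclose i)
  exact ⟨q * N, by linarith [le_max_left B δ], k, fun i => (hk i).1, fun i => (hk i).2⟩

/-- Gürel's combinatorial lemma (Lemma 5.2): given `r` sequences of indices satisfying the
index–mean-index inequality with positive mean indices, for every `ε > 0` there are infinitely
many pairwise disjoint closed intervals of length `2n + ε` each containing simultaneous
iterated indices `μ_{i, k_i}` for all `i`. -/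
theorem stmt_5 (n r : ℕ) (μhat : Fin r → ℝ) (hpos : ∀ i, 0 < μhat i)
    (μ : Fin r → ℕ → ℤ)
    (h : ∀ i, ∀ j : ℕ, 1 ≤ j → |(j : ℝ) * μhat i - (μ i j : ℝ)| < n)
    (ε : ℝ) (hε : 0 < ε) :
    ∃ I : ℕ → Set ℝ,
      (∀ m : ℕ, ∃ a : ℝ, I m = Set.Icc a (a + (2 * n + ε))) ∧
      (Pairwise fun m m' => Disjoint (I m) (I m')) ∧
      (∀ m : ℕ, ∃ k : Fin r → ℕ, (∀ i, 1 ≤ k i) ∧ ∀ i, ((μ i (k i) : ℝ)) ∈ I m) := by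
  set J : ℝ → Set ℝ := fun T => Icc (T - (n + ε / 2)) (T - (n + ε / 2) + (2 * n + ε))
  have hJ : ∀ T T', T + (2 * n + ε) < T' → Disjoint (J T) (J T') := fun T T' hTT' =>
    Set.disjoint_left.2 fun x hx hx' => by linarith [hx.2, hx'.1]
  have : Std.Symm fun T T' => Disjoint (J T) (J T') := ⟨fun _ _ h => h.symm⟩
  obtain ⟨T, hT, hdisj⟩ := exists_seq_of_forall_finset_exists'
    (fun T => ∃ k : Fin r → ℕ, (∀ i, 0 < k i) ∧ ∀ i, |(k i : ℝ) * μhat i - T| < ε / 2)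
    (fun T T' => Disjoint (J T) (J T')) fun s _ => by
      obtain ⟨M, hM⟩ := s.bddAbove
      obtain ⟨T, hMT, hT⟩ :=
        exists_ge_forall_abs_nat_mul_sub_lt hpos (half_pos hε) (M + (2 * n + ε) + 1)
      exact ⟨T, hT, fun T' hT' => hJ T' T (by linarith [hM hT'])⟩
  refine ⟨J ∘ T, fun m => ⟨_, rfl⟩, hdisj, fun m => ?_⟩
  obtain ⟨k, hk, hkT⟩ := hT m
  refine ⟨k, hk, fun i => ?_⟩
  have hμ := abs_lt.1 (h i (k i) (hk i))
  have hkTi := abs_lt.1 (hkT i)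
  constructor <;> linarith [hμ.1, hμ.2, hkTi.1, hkTi.2]
end

section
/- Let $(\mu_j)_{j \geq 1}$ be a sequence of integers, $d \in \mathbb{Z}$, $k, \ell_0 \in \mathbb{N}$ with $\ell_0 + 2 \leq k$. Assume: (a) $\mu_{k+\ell} = d + \mu_\ell$ and $\mu_{k-\ell} = d - \mu_\ell$ for all $1 \leq \ell \leq \ell_0$; (b) $\mu_j \geq 1$ for all $j$; (c) $\mu_{m+\ell} \geq \mu_m$ whenever $\ell \geq \ell_0$ and $m \geq 1$. Then $\mu_{k-\ell} \leq d - 1$ for all $1 \leq \ell < k$, and $\mu_{k+\ell} \geq d + 1$ for all $\ell \geq 1$. -/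
/-! Indices `ℓ ≤ ℓ₀` are handled by (a) and (b) directly. For `ℓ > ℓ₀` the gap between `k ± 1`
and `k ± ℓ` is at least `ℓ₀`, so (c) compares `μ (k ± ℓ)` with `μ (k ± 1) = d ± μ 1`. -/

theorem le_of_add_le_of_forall_le_add {μ : ℕ → ℤ} {ℓ₀ : ℕ}
    (hc : ∀ m ℓ : ℕ, 1 ≤ m → ℓ₀ ≤ ℓ → μ m ≤ μ (m + ℓ)) {m n : ℕ} (hm : 1 ≤ m)
    (hmn : m + ℓ₀ ≤ n) : μ m ≤ μ n := by
  simpa [Nat.add_sub_cancel' (le_of_add_le_left hmn)] using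
    hc m (n - m) hm (Nat.le_sub_of_add_le' hmn)

theorem stmt_7_general (μ : ℕ → ℤ) (d : ℤ) (k ℓ₀ : ℕ) (hℓ₀ : 1 ≤ ℓ₀)
    (ha : ∀ ℓ : ℕ, 1 ≤ ℓ → ℓ ≤ ℓ₀ → μ (k + ℓ) = d + μ ℓ ∧ μ (k - ℓ) = d - μ ℓ)
    (hb : ∀ j : ℕ, 1 ≤ j → 1 ≤ μ j)
    (hc : ∀ m ℓ : ℕ, 1 ≤ m → ℓ₀ ≤ ℓ → μ m ≤ μ (m + ℓ)) :
    (∀ ℓ : ℕ, 1 ≤ ℓ → ℓ < k → μ (k - ℓ) ≤ d - 1) ∧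
    (∀ ℓ : ℕ, 1 ≤ ℓ → d + 1 ≤ μ (k + ℓ)) := by
  have hμ₁ := hb 1 le_rfl
  obtain ⟨hk_add₁, hk_sub₁⟩ := ha 1 le_rfl hℓ₀
  refine ⟨fun ℓ hℓ hℓk => ?_, fun ℓ hℓ => ?_⟩
  · rcases le_or_gt ℓ ℓ₀ with hle | hlt
    · linarith [(ha ℓ hℓ hle).2, hb ℓ hℓ]
    · calc μ (k - ℓ) ≤ μ (k - 1) := le_of_add_le_of_forall_le_add hc (by omega) (by omega)
        _ ≤ d - 1 := by linarith
  · rcases le_or_gt ℓ ℓ₀ with hle | hlt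
    · linarith [(ha ℓ hℓ hle).1, hb ℓ hℓ]
    · calc d + 1 ≤ μ (k + 1) := by linarith
        _ ≤ μ (k + ℓ) := le_of_add_le_of_forall_le_add hc (by omega) (by omega)

/-- Derivation of the bounds (eq:bound1)–(eq:bound2): from the index recurrence identities,
positivity of indices, and eventual monotonicity under iteration, all indices `μ_{k±ℓ}` are
bounded away from `d`. -/
theorem stmt_7 (μ : ℕ → ℤ) (d : ℤ) (k ℓ₀ : ℕ) (hℓ₀ : 1 ≤ ℓ₀) (hk : ℓ₀ + 2 ≤ k)
    (ha : ∀ ℓ : ℕ, 1 ≤ ℓ → ℓ ≤ ℓ₀ → μ (k + ℓ) = d + μ ℓ ∧ μ (k - ℓ) = d - μ ℓ)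
    (hb : ∀ j : ℕ, 1 ≤ j → 1 ≤ μ j)
    (hc : ∀ m ℓ : ℕ, 1 ≤ m → ℓ₀ ≤ ℓ → μ m ≤ μ (m + ℓ)) :
    (∀ ℓ : ℕ, 1 ≤ ℓ → ℓ < k → μ (k - ℓ) ≤ d - 1) ∧
    (∀ ℓ : ℕ, 1 ≤ ℓ → d + 1 ≤ μ (k + ℓ)) :=
  stmt_7_general μ d k ℓ₀ hℓ₀ ha hb hc
end

section
/- Let $(\mu_j)_{j\geq 1}$ be integers, $d = 2sc$ for integers $s,c \geq 1$, and $k > \ell_0 \geq 1$ integers with: (a) $\mu_{k+\ell} = d + \mu_\ell$ and $\mu_{k-\ell} = d - \mu_\ell$ for $1 \leq \ell \leq \ell_0$; (b) $\mu_{m+\ell} \geq \mu_m + n + 3$ for all $m \geq 1$, $\ell \geq \ell_0$; (c) $|\hat\mu j - \mu_j| < n$ for all $j$ for some real $\hat\mu$ with $|\hat\mu k - d| < 1$; (d) $\mu_j$ is odd for all $j$ (parity $n$ odd). Then the number of $j \in \mathbb{N}$, $j \neq k$, with $\mu_j \leq d$ equals $k - 1$. -/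
/-!
Outside the window `k - ℓ₀ < j < k + ℓ₀` the growth property, measured from `μ k ≈ d`, decides
`μ j ≤ d` (true below `k`, false above). Inside, the recurrence gives
`μ (k - ℓ) - d = d - μ (k + ℓ) = -μ ℓ`, and `μ ℓ` is odd, hence nonzero, so exactly one of
`k ± ℓ` has index `≤ d`. Thus `j ↦ |j - k|` is a bijection from the counted set onto `{1, …, k - 1}`.
-/

theorem Set.ncard_eq_of_mem_sub_iff_notMem_add {S : Set ℕ} {k : ℕ}
    (hsub : ∀ j ∈ S, 0 < j ∧ j < 2 * k ∧ j ≠ k)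
    (hpair : ∀ i, 0 < i → i < k → (k - i ∈ S ↔ k + i ∉ S)) :
    S.ncard = k - 1 := by
  have hfar : ∀ a ∈ S, ∀ b ∈ S, a < k → k < b → k - a ≠ b - k := by
    intro a ha b hb hak hkb hab
    have := hpair (k - a) (by omega) (by have := (hsub a ha).1; omega)
    rw [Nat.sub_sub_self hak.le, hab, Nat.add_sub_cancel' hkb.le] at this
    exact this.mp ha hb
  have hinj : S.InjOn (Nat.dist · k) := by
    intro a ha b hb hab
    have := hfar a ha b hb; have := hfar b hb a ha
    have := (hsub a ha).2.2; have := (hsub b hb).2.2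
    simp only [Nat.dist] at hab
    omega
  have himage : (Nat.dist · k) '' S = Finset.Ioo 0 k := by
    ext i
    simp only [Set.mem_image, Finset.coe_Ioo, Set.mem_Ioo, Nat.dist]
    constructor
    · rintro ⟨j, hj, rfl⟩
      have := hsub j hj
      omega
    · rintro ⟨hi0, hik⟩
      by_cases h : k - i ∈ S
      · exact ⟨k - i, h, by omega⟩
      · exact ⟨k + i, not_not.mp (mt (hpair i hi0 hik).mpr h), by omega⟩
  rw [← hinj.ncard_image, himage, Set.ncard_coe_finset, Nat.card_Ioo, Nat.sub_zero]

theorem Int.abs_sub_le_of_abs_sub_lt {x y : ℤ} {n : ℕ} {a : ℝ}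
    (hx : |a - x| < n) (hy : |a - y| < 1) : |x - y| ≤ n := by
  have : |((x - y : ℤ) : ℝ)| < n + 1 := by
    push_cast
    rw [abs_lt] at *
    constructor <;> linarith
  exact Int.lt_add_one_iff.mp (by exact_mod_cast this)

theorem stmt_9_general (n : ℕ)
    (μ : ℕ → ℤ) (μhat : ℝ) (d : ℤ) (k ℓ₀ : ℕ) (hk : ℓ₀ < k)
    (ha : ∀ ℓ : ℕ, 1 ≤ ℓ → ℓ ≤ ℓ₀ → μ (k + ℓ) = d + μ ℓ ∧ μ (k - ℓ) = d - μ ℓ)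
    (hgrow : ∀ m ℓ : ℕ, 1 ≤ m → ℓ₀ ≤ ℓ → μ m + (n : ℤ) + 3 ≤ μ (m + ℓ))
    (hmean : ∀ j : ℕ, 1 ≤ j → |μhat * (j : ℝ) - (μ j : ℝ)| < n)
    (hmeank : |μhat * (k : ℝ) - (d : ℝ)| < 1)
    (hodd : ∀ j : ℕ, 1 ≤ j → Odd (μ j)) :
    {j : ℕ | 1 ≤ j ∧ j ≠ k ∧ μ j ≤ d}.Finite ∧
      {j : ℕ | 1 ≤ j ∧ j ≠ k ∧ μ j ≤ d}.ncard = k - 1 := by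
  set S := {j : ℕ | 1 ≤ j ∧ j ≠ k ∧ μ j ≤ d}
  have hμk := abs_le.mp (Int.abs_sub_le_of_abs_sub_lt (hmean k (by omega)) hmeank)
  have hbelow : ∀ j, 1 ≤ j → j + ℓ₀ ≤ k → μ j < d := fun j hj hjk => by
    have := hgrow j (k - j) hj (by omega)
    rw [Nat.add_sub_cancel' (by omega)] at this
    omega
  have habove : ∀ j, k + ℓ₀ ≤ j → d < μ j := fun j hjk => by
    have := hgrow k (j - k) (by omega) (by omega)
    rw [Nat.add_sub_cancel' (by omega)] at this
    omega
  have hsub : ∀ j ∈ S, 0 < j ∧ j < 2 * k ∧ j ≠ k := fun j ⟨hj, hjk, hμj⟩ =>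
    ⟨hj, by by_contra h; exact (habove j (by omega)).not_ge hμj, hjk⟩
  have hpair : ∀ i, 0 < i → i < k → (k - i ∈ S ↔ k + i ∉ S) := by
    intro i hi hik
    simp only [S, Set.mem_ofPred_eq]
    rcases le_or_gt i ℓ₀ with hiℓ | hiℓ
    · obtain ⟨hplus, hminus⟩ := ha i hi hiℓ
      have : μ i ≠ 0 := fun h => by simpa [h] using hodd i hi
      omega
    · have := hbelow (k - i) (by omega) (by omega)
      have := habove (k + i) (by omega)
      omega
  exact ⟨(Set.finite_Iio (2 * k)).subset fun j hj => (hsub j hj).2.1,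
    Set.ncard_eq_of_mem_sub_iff_notMem_add hsub hpair⟩

/-- Identity (eq:k_i) of Appendix A: with the index recurrence, the strengthened growth
property, the index–mean-index inequality, and odd parity of all indices,
the number of iterates `j ≠ k` with `μ_j ≤ d` is exactly `k − 1`. -/
theorem stmt_9 (n s c : ℕ) (hs : 1 ≤ s) (hc : 1 ≤ c)
    (μ : ℕ → ℤ) (μhat : ℝ) (d : ℤ) (k ℓ₀ : ℕ) (hℓ₀ : 1 ≤ ℓ₀) (hk : ℓ₀ < k)
    (hd : d = 2 * (s : ℤ) * (c : ℤ))
    (ha : ∀ ℓ : ℕ, 1 ≤ ℓ → ℓ ≤ ℓ₀ → μ (k + ℓ) = d + μ ℓ ∧ μ (k - ℓ) = d - μ ℓ)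
    (hgrow : ∀ m ℓ : ℕ, 1 ≤ m → ℓ₀ ≤ ℓ → μ m + (n : ℤ) + 3 ≤ μ (m + ℓ))
    (hmean : ∀ j : ℕ, 1 ≤ j → |μhat * (j : ℝ) - (μ j : ℝ)| < n)
    (hmeank : |μhat * (k : ℝ) - (d : ℝ)| < 1)
    (hodd : ∀ j : ℕ, 1 ≤ j → Odd (μ j)) :
    {j : ℕ | 1 ≤ j ∧ j ≠ k ∧ μ j ≤ d}.Finite ∧
      {j : ℕ | 1 ≤ j ∧ j ≠ k ∧ μ j ≤ d}.ncard = k - 1 :=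
  stmt_9_general n μ μhat d k ℓ₀ hk ha hgrow hmean hmeank hodd
end

section
/- Let $n \geq 2$ be even, and let $(\mu_j)_{j\geq 1}$ be even integers with $d = 2sc$ even, $k > \ell_0 \geq 1$, satisfying: (a) $\mu_{k+\ell} = d + \mu_\ell$, $\mu_{k-\ell} = d - \mu_\ell$ for $1 \leq \ell \leq \ell_0$; (b) $\mu_{m+\ell} \geq \mu_m + n + 3$ for $m \geq 1$, $\ell \geq \ell_0$; (c) $|\hat\mu j - \mu_j| < n$ with $|\hat\mu k - d| < 1$. Let $c_0 = \#\{j \geq 1 : \mu_j = 0\}$ (finite, and all such $j \leq \ell_0$). Then $\#\{j \geq 1,\ j \neq k : \mu_j \leq d\} = k - 1 + c_0$. -/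
open Finset

/-!
Since `μ k` lies within `n + 1` of `d` and `μ` grows by at least `n + 3` over any `ℓ₀` steps,
`μ j ≤ d` for `j + ℓ₀ < k` and `μ j > d` for `j > k + ℓ₀`. In the window between, the reflection
`μ (k ± ℓ) = d ± μ ℓ` pairs `k - ℓ` with `k + ℓ`: exactly one of the two satisfies `μ ≤ d` when
`μ ℓ ≠ 0`, and both do when `μ ℓ = 0`.
-/

lemma Int.abs_sub_lt_add_one_of_abs_sub_lt (n : ℕ) {a : ℝ} {x y : ℤ}
    (hx : |a - x| < n) (hy : |a - y| < 1) : |x - y| < n + 1 := by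
  have : |(x : ℝ) - y| < n + 1 :=
    calc |(x : ℝ) - y| ≤ |a - x| + |a - y| := abs_sub_comm a x ▸ abs_sub_le _ _ _
      _ < n + 1 := by linarith
  exact_mod_cast this

section Reflection

variable {μ : ℕ → ℤ} {d : ℤ} {k ℓ₀ : ℕ}

lemma setOf_ne_le_eq_union
    (hrefl : ∀ ℓ, 1 ≤ ℓ → ℓ ≤ ℓ₀ → μ (k + ℓ) = d + μ ℓ ∧ μ (k - ℓ) = d - μ ℓ)
    (habove : ∀ j, k + ℓ₀ < j → d < μ j) :
    {j : ℕ | 1 ≤ j ∧ j ≠ k ∧ μ j ≤ d} =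
      ↑({j ∈ Ico 1 k | μ j ≤ d} ∪ {ℓ ∈ Icc 1 ℓ₀ | μ ℓ ≤ 0}.map (addLeftEmbedding k)) := by
  ext j
  simp only [coe_union, coe_filter, coe_map, Set.mem_union, Set.mem_image,
    mem_Ico, mem_Icc, addLeftEmbedding_apply, Set.mem_ofPred_eq]
  constructor
  · rintro ⟨hj, hjk, hjd⟩
    rcases lt_or_gt_of_ne hjk with hlt | hgt
    · exact .inl ⟨⟨hj, hlt⟩, hjd⟩
    · obtain ⟨ℓ, rfl⟩ := Nat.exists_eq_add_of_lt hgt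
      have hℓ : k + (ℓ + 1) ≤ k + ℓ₀ := not_lt.mp fun h => (habove _ h).not_ge hjd
      refine .inr ⟨ℓ + 1, ⟨⟨by omega, by omega⟩, ?_⟩, by omega⟩
      have := (hrefl (ℓ + 1) (by omega) (by omega)).1
      rw [add_assoc] at hjd
      omega
  · rintro (⟨⟨hj, hjk⟩, hjd⟩ | ⟨ℓ, ⟨⟨hℓ, hℓ₀⟩, hμ⟩, rfl⟩)
    · exact ⟨hj, hjk.ne, hjd⟩
    · have := (hrefl ℓ hℓ hℓ₀).1
      exact ⟨by omega, by omega, by omega⟩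

lemma card_filter_lt_Ico_eq_card_filter_neg (hk : ℓ₀ < k)
    (hrefl : ∀ ℓ, 1 ≤ ℓ → ℓ ≤ ℓ₀ → μ (k + ℓ) = d + μ ℓ ∧ μ (k - ℓ) = d - μ ℓ)
    (hbelow : ∀ j, 1 ≤ j → j + ℓ₀ < k → μ j ≤ d) :
    #{j ∈ Ico 1 k | d < μ j} = #{ℓ ∈ Icc 1 ℓ₀ | μ ℓ < 0} := by
  refine card_bij' (fun j _ => k - j) (fun ℓ _ => k - ℓ) ?_ ?_ ?_ ?_
  · intro j hj
    simp only [mem_filter, mem_Ico, mem_Icc] at hj ⊢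
    obtain ⟨⟨hj1, hjk⟩, hjd⟩ := hj
    have hwin : k ≤ j + ℓ₀ := not_lt.mp fun h => (hbelow j hj1 h).not_gt hjd
    have := (hrefl (k - j) (by omega) (by omega)).2
    rw [Nat.sub_sub_self hjk.le] at this
    exact ⟨⟨by omega, by omega⟩, by omega⟩
  · intro ℓ hℓ
    simp only [mem_filter, mem_Ico, mem_Icc] at hℓ ⊢
    obtain ⟨⟨hℓ1, hℓℓ₀⟩, hμ⟩ := hℓ
    have := (hrefl ℓ hℓ1 hℓℓ₀).2
    exact ⟨⟨by omega, by omega⟩, by omega⟩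
  · intro j hj
    simp only [mem_filter, mem_Ico] at hj
    omega
  · intro ℓ hℓ
    simp only [mem_filter, mem_Icc] at hℓ
    omega

lemma card_filter_le_eq_card_filter_lt_add {α β : Type*} [DecidableEq α] [LinearOrder β]
    (s : Finset α) (f : α → β) (b : β) :
    #{x ∈ s | f x ≤ b} = #{x ∈ s | f x < b} + #{x ∈ s | f x = b} := by
  rw [← card_union_of_disjoint (disjoint_filter.mpr fun _ _ h => h.ne), ← filter_or]
  simp_rw [le_iff_lt_or_eq]

lemma ncard_setOf_ne_le (hk : ℓ₀ < k)
    (hrefl : ∀ ℓ, 1 ≤ ℓ → ℓ ≤ ℓ₀ → μ (k + ℓ) = d + μ ℓ ∧ μ (k - ℓ) = d - μ ℓ)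
    (hbelow : ∀ j, 1 ≤ j → j + ℓ₀ < k → μ j ≤ d) (habove : ∀ j, k + ℓ₀ < j → d < μ j) :
    {j : ℕ | 1 ≤ j ∧ j ≠ k ∧ μ j ≤ d}.Finite ∧
      {j : ℕ | 1 ≤ j ∧ j ≠ k ∧ μ j ≤ d}.ncard = k - 1 + #{ℓ ∈ Icc 1 ℓ₀ | μ ℓ = 0} := by
  rw [setOf_ne_le_eq_union hrefl habove, Set.ncard_coe_finset]
  refine ⟨finite_toSet _, ?_⟩
  have hdisj :
      Disjoint {j ∈ Ico 1 k | μ j ≤ d} ({ℓ ∈ Icc 1 ℓ₀ | μ ℓ ≤ 0}.map (addLeftEmbedding k)) := by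
    simp only [disjoint_left, mem_filter, mem_Ico, mem_map, addLeftEmbedding_apply]
    rintro _ ⟨⟨_, hjk⟩, _⟩ ⟨ℓ, _, rfl⟩
    omega
  have hlow := card_filter_add_card_filter_not (s := Ico 1 k) (p := fun j => μ j ≤ d)
  simp only [not_le, Nat.card_Ico] at hlow
  rw [card_union_of_disjoint hdisj, card_map, card_filter_le_eq_card_filter_lt_add _ _ (0 : ℤ),
    ← card_filter_lt_Ico_eq_card_filter_neg hk hrefl hbelow]
  omega

end Reflection

theorem stmt_19_general (n : ℕ)
    (μ : ℕ → ℤ) (μhat : ℝ) (d : ℤ) (k ℓ₀ : ℕ) (hk : ℓ₀ < k)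
    (ha : ∀ ℓ : ℕ, 1 ≤ ℓ → ℓ ≤ ℓ₀ → μ (k + ℓ) = d + μ ℓ ∧ μ (k - ℓ) = d - μ ℓ)
    (hgrow : ∀ m ℓ : ℕ, 1 ≤ m → ℓ₀ ≤ ℓ → μ m + (n : ℤ) + 3 ≤ μ (m + ℓ))
    (hmean : ∀ j : ℕ, 1 ≤ j → |μhat * (j : ℝ) - (μ j : ℝ)| < n)
    (hmeank : |μhat * (k : ℝ) - (d : ℝ)| < 1)
    (hle0 : ∀ j : ℕ, 1 ≤ j → μ j = 0 → j ≤ ℓ₀) :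
    {j : ℕ | 1 ≤ j ∧ j ≠ k ∧ μ j ≤ d}.Finite ∧
      {j : ℕ | 1 ≤ j ∧ j ≠ k ∧ μ j ≤ d}.ncard =
        k - 1 + {j : ℕ | 1 ≤ j ∧ μ j = 0}.ncard := by
  have hk1 : 1 ≤ k := by omega
  have hμk := abs_lt.mp (Int.abs_sub_lt_add_one_of_abs_sub_lt n (hmean k hk1) hmeank)
  have hzero : {j : ℕ | 1 ≤ j ∧ μ j = 0} = ↑{ℓ ∈ Icc 1 ℓ₀ | μ ℓ = 0} := by
    ext j
    simp only [Set.mem_ofPred_eq, coe_filter, mem_Icc]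
    exact ⟨fun ⟨hj, h0⟩ => ⟨⟨hj, hle0 j hj h0⟩, h0⟩, fun ⟨⟨hj, _⟩, h0⟩ => ⟨hj, h0⟩⟩
  rw [hzero, Set.ncard_coe_finset]
  refine ncard_setOf_ne_le hk ha (fun j hj hjk => ?below) (fun j hjk => ?above)
  case below =>
    have := hgrow j (k - j) hj (by omega)
    rw [Nat.add_sub_cancel' (by omega)] at this
    linarith [hμk.2]
  case above =>
    have := hgrow k (j - k) hk1 (by omega)
    rw [Nat.add_sub_cancel' (by omega)] at this
    linarith [hμk.1]

/-- Identity (eq:k_i2) of Appendix A, Case 2 (`n` even): with all indices even, zero-index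
iterates are possible (all occurring for `j ≤ ℓ₀`), and the count of iterates `j ≠ k` with
`μ_j ≤ d` equals `k − 1 + c₀`, where `c₀` is the number of zero-index iterates. -/
theorem stmt_19 (n s c : ℕ) (hn : 2 ≤ n) (hneven : Even n) (hs : 1 ≤ s) (hc : 1 ≤ c)
    (μ : ℕ → ℤ) (μhat : ℝ) (d : ℤ) (k ℓ₀ : ℕ) (hℓ₀ : 1 ≤ ℓ₀) (hk : ℓ₀ < k)
    (hd : d = 2 * (s : ℤ) * (c : ℤ))
    (heven : ∀ j : ℕ, 1 ≤ j → Even (μ j))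
    (ha : ∀ ℓ : ℕ, 1 ≤ ℓ → ℓ ≤ ℓ₀ → μ (k + ℓ) = d + μ ℓ ∧ μ (k - ℓ) = d - μ ℓ)
    (hgrow : ∀ m ℓ : ℕ, 1 ≤ m → ℓ₀ ≤ ℓ → μ m + (n : ℤ) + 3 ≤ μ (m + ℓ))
    (hmean : ∀ j : ℕ, 1 ≤ j → |μhat * (j : ℝ) - (μ j : ℝ)| < n)
    (hmeank : |μhat * (k : ℝ) - (d : ℝ)| < 1)
    (hfin0 : {j : ℕ | 1 ≤ j ∧ μ j = 0}.Finite)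
    (hle0 : ∀ j : ℕ, 1 ≤ j → μ j = 0 → j ≤ ℓ₀) :
    {j : ℕ | 1 ≤ j ∧ j ≠ k ∧ μ j ≤ d}.Finite ∧
      {j : ℕ | 1 ≤ j ∧ j ≠ k ∧ μ j ≤ d}.ncard =
        k - 1 + {j : ℕ | 1 ≤ j ∧ μ j = 0}.ncard :=
  stmt_19_general n μ μhat d k ℓ₀ hk ha hgrow hmean hmeank hle0
end
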